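/- Theorem 2, part 2 (reduction correctness: 3-PARTITION and 1|Δ̄ ≤ ε, ΣT ≤ 0|−). Let t ≥ 1 and y ≥ 1 be integers and let a_1, …, a_{3t} be positive integers with Σ_{i=1}^{3t} a_i = t·y. Build the same rescheduling instance as in Theorem 2, part 1: old short jobs 1, …, t with p = 1 and due date t(2ty+1); old long jobs t+1, …, 2t with p = ty and due date t(2ty+1); new jobs g_1, …, g_{3t} where g_i has processing time t·a_i and due date t²y + t − 1; initial schedule π* in which, for k = 1, …, t, long job t+k occupies [(k−1)(ty+1), (k−1)(ty+1)+ty) and short job k occupies [(k−1)(ty+1)+ty, k(ty+1)); and ε = t³y + t(t+1)/2. Then there exists a partition of {1, …, 3t} into t pairwise disjoint subsets S_1, …, S_t whose union is {1, …, 3t} with Σ_{i∈S_j} a_i = y for every j, if and only if there exists a schedule σ of all 5t jobs with Δ̄(σ) ≤ ε and total tardiness T̄(σ) = 0. -/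

import Mathlib

open Finset

/-- A schedule of the job set `K`: each job gets a start time, and the processing
intervals `[S j, S j + p j)` of distinct jobs are pairwise disjoint. -/
def IsSchedule (K : Finset ℕ) (p S : ℕ → ℕ) : Prop :=
  ∀ i ∈ K, ∀ j ∈ K, i ≠ j → S i + p i ≤ S j ∨ S j + p j ≤ S i

/-- No inserted idle time: the processing intervals exactly partition `[0, Σ p)`
(jobs are processed consecutively from time 0). -/
def NoIdle (K : Finset ℕ) (p S : ℕ → ℕ) : Prop :=
  (∀ j ∈ K, S j + p j ≤ ∑ i ∈ K, p i) ∧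
    ∀ t < ∑ i ∈ K, p i, ∃ j ∈ K, S j ≤ t ∧ t < S j + p j

/-- Disruption of job `j`: `|C_j(S) - C_j(π)|`. -/
def disr (p π S : ℕ → ℕ) (j : ℕ) : ℕ :=
  (((S j + p j : ℕ) : ℤ) - ((π j + p j : ℕ) : ℤ)).natAbs

/-- Maximum disruption over the old jobs. -/
def Dmax (JO : Finset ℕ) (p π S : ℕ → ℕ) : ℕ := JO.sup (disr p π S)

/-- Total disruption over the old jobs. -/
def Dsum (JO : Finset ℕ) (p π S : ℕ → ℕ) : ℕ := ∑ j ∈ JO, disr p π S j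

/-- `S` preserves the old-job order of `π`: old jobs completing earlier in `π`
complete earlier in `S`. -/
def PreservesOrder (JO : Finset ℕ) (p π S : ℕ → ℕ) : Prop :=
  ∀ i ∈ JO, ∀ j ∈ JO, π i + p i < π j + p j → S i + p i < S j + p j

/-- Maximum lateness `max_{j ∈ J} (C_j - d_j)`. -/
def Lmax (J : Finset ℕ) (p : ℕ → ℕ) (d : ℕ → ℤ) (S : ℕ → ℕ) : WithBot ℤ :=
  J.sup fun j => (((((S j + p j : ℕ) : ℤ) - d j : ℤ)) : WithBot ℤ)

/-- Number of tardy jobs. -/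
def nTardy (J : Finset ℕ) (p : ℕ → ℕ) (d : ℕ → ℤ) (S : ℕ → ℕ) : ℕ :=
  (J.filter fun j => d j < ((S j + p j : ℕ) : ℤ)).card

/-- Total tardiness `Σ_{j ∈ J} max 0 (C_j - d_j)`. -/
def Ttot (J : Finset ℕ) (p : ℕ → ℕ) (d : ℕ → ℤ) (S : ℕ → ℕ) : ℤ :=
  ∑ j ∈ J, max 0 (((S j + p j : ℕ) : ℤ) - d j)

/-- Total completion time. -/
def Ctot (J : Finset ℕ) (p S : ℕ → ℕ) : ℕ := ∑ j ∈ J, (S j + p j)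

/-- Total weighted completion time. -/
def wCtot (J : Finset ℕ) (w p S : ℕ → ℕ) : ℕ := ∑ j ∈ J, w j * (S j + p j)

/-- Maximum of the regular costs `f_j(C_j)`. -/
def Fmax (J : Finset ℕ) (p : ℕ → ℕ) (f : ℕ → ℕ → ℝ) (S : ℕ → ℕ) : WithBot ℝ :=
  J.sup fun j => ((f j (S j + p j) : ℝ) : WithBot ℝ)

/-- Sum of the regular costs `f_j(C_j)`. -/
def Fsum (J : Finset ℕ) (p : ℕ → ℕ) (f : ℕ → ℕ → ℝ) (S : ℕ → ℕ) : ℝ :=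
  ∑ j ∈ J, f j (S j + p j)

/-- Processing times of the reduction instance: old short jobs `1, …, t` have p = 1,
old long jobs `t+1, …, 2t` have p = ty, and new job `2t + i` (= g_i, 1 ≤ i ≤ 3t)
has p = t * a_i. -/
def p3P (t y : ℕ) (a : ℕ → ℕ) : ℕ → ℕ := fun j =>
  if j ≤ t then 1 else if j ≤ 2 * t then t * y else t * a (j - 2 * t)

/-- Due dates: every old job has due date t(2ty+1), every new job has due date t²y + t − 1. -/
def d3P (t y : ℕ) : ℕ → ℤ := fun j =>
  if j ≤ 2 * t then ((t : ℤ) * (2 * t * y + 1)) else ((t : ℤ) ^ 2 * y + t - 1)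

/-- Initial schedule π*: for k = 1, …, t, long job t+k occupies
[(k−1)(ty+1), (k−1)(ty+1)+ty) and short job k occupies [(k−1)(ty+1)+ty, k(ty+1)). -/
def pi3P (t y : ℕ) : ℕ → ℕ := fun j =>
  if j ≤ t then (j - 1) * (t * y + 1) + t * y else (j - t - 1) * (t * y + 1)

lemma IsSchedule.mono {K K' : Finset ℕ} {p S : ℕ → ℕ} (h : IsSchedule K p S)
    (hsub : K' ⊆ K) : IsSchedule K' p S :=
  fun i hi j hj hij => h i (hsub hi) j (hsub hj) hij

lemma packing_lemma (K : Finset ℕ) (p S : ℕ → ℕ)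
    (h : IsSchedule K p S) (A B : ℕ)
    (hB : ∀ j ∈ K, A ≤ S j ∧ S j + p j ≤ B) : ∑ j ∈ K, p j ≤ B - A := by
  classical
  have hdisj : (K : Set ℕ).PairwiseDisjoint (fun j => Finset.Ico (S j) (S j + p j)) := by
    intro i hi j hj hij
    rcases h i hi j hj hij with hle | hle <;>
      exact Finset.disjoint_left.2 (by
        intro x hx hx'
        simp only [Finset.mem_Ico] at hx hx'
        omega)
  have hcard : ∑ j ∈ K, p j = (K.biUnion fun j => Finset.Ico (S j) (S j + p j)).card := by
    rw [Finset.card_biUnion (fun i hi j hj hij => hdisj hi hj hij)]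
    exact Finset.sum_congr rfl (fun j _ => by simp)
  rw [hcard]
  have hsub : (K.biUnion fun j => Finset.Ico (S j) (S j + p j)) ⊆ Finset.Ico A B := by
    intro x hx
    simp only [Finset.mem_biUnion, Finset.mem_Ico] at hx ⊢
    obtain ⟨j, hj, h1, h2⟩ := hx
    have := hB j hj
    omega
  simpa using Finset.card_le_card hsub

lemma distinct_completions (K : Finset ℕ) (p S : ℕ → ℕ) (h : IsSchedule K p S)
    (hp : ∀ j ∈ K, 0 < p j) {i j : ℕ} (hi : i ∈ K) (hj : j ∈ K) (hij : i ≠ j) :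
    S i + p i ≠ S j + p j := by
  rcases h i hi j hj hij with hle | hle
  · have := hp j hj; omega
  · have := hp i hi; omega

lemma rank_sum (K : Finset ℕ) (f : ℕ → ℕ)
    (hf : ∀ i ∈ K, ∀ j ∈ K, i ≠ j → f i ≠ f j) :
    2 * ∑ x ∈ K, (K.filter fun x' => f x' ≤ f x).card = K.card * (K.card + 1) := by
  classical
  have expand : ∀ x ∈ K, (K.filter fun x' => f x' ≤ f x).card
      = ∑ x' ∈ K, if f x' ≤ f x then 1 else 0 := fun x _ => Finset.card_filter _ _
  have swap : ∑ x ∈ K, ∑ x' ∈ K, ((if f x' ≤ f x then 1 else 0) : ℕ)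
      = ∑ x ∈ K, ∑ x' ∈ K, ((if f x ≤ f x' then 1 else 0) : ℕ) := Finset.sum_comm
  calc 2 * ∑ x ∈ K, (K.filter fun x' => f x' ≤ f x).card
      = ∑ x ∈ K, ∑ x' ∈ K, (((if f x' ≤ f x then 1 else 0) : ℕ) + if f x ≤ f x' then 1 else 0) := by
        rw [Finset.sum_congr rfl expand, two_mul]
        nth_rewrite 2 [swap]
        rw [← Finset.sum_add_distrib]
        apply Finset.sum_congr rfl; intro x _
        rw [← Finset.sum_add_distrib]
    _ = ∑ x ∈ K, ∑ x' ∈ K, ((if x = x' then 2 else 1) : ℕ) := by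
        apply Finset.sum_congr rfl; intro x hx
        apply Finset.sum_congr rfl; intro x' hx'
        by_cases hxx : x = x'
        · subst hxx; simp
        · have h1 := hf x hx x' hx' hxx
          rcases le_or_gt (f x') (f x) with h | h
          · rcases lt_or_eq_of_le h with h2 | h2
            · simp [if_neg hxx, h, not_le.2 h2]
            · exact absurd h2.symm h1
          · simp [if_neg hxx, not_le.2 h, le_of_lt h]
    _ = K.card * (K.card + 1) := by
        have h2 : ∀ x ∈ K, ∑ x' ∈ K, ((if x = x' then 2 else 1) : ℕ) = K.card + 1 := by
          intro x hx
          have h3 : ∑ x' ∈ K, ((if x = x' then 2 else 1) : ℕ)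
              = ∑ x' ∈ K, (1 + if x = x' then 1 else 0) := by
            apply Finset.sum_congr rfl; intro x' _
            by_cases h : x = x' <;> simp [h]
          rw [h3, Finset.sum_add_distrib]
          simp [Finset.sum_ite_eq, hx, add_comm]
        rw [Finset.sum_congr rfl h2]
        simp [Finset.sum_const, mul_comm]

/-- distinct naturals: twice their sum is at least q(q-1). -/
lemma sum_distinct_ge (B : Finset ℕ) : B.card * (B.card + 1) ≤ 2 * ∑ b ∈ B, b + 2 * B.card := by
  classical
  have hr := rank_sum B id (fun i _ j _ hij => hij)
  have hb : ∀ b ∈ B, (B.filter fun b' => id b' ≤ id b).card ≤ b + 1 := by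
    intro b _
    have : (B.filter fun b' => id b' ≤ id b) ⊆ Finset.range (b+1) := by
      intro x hx
      simp only [Finset.mem_filter, id] at hx
      simp [Nat.lt_succ_iff, hx.2]
    simpa using Finset.card_le_card this
  calc B.card * (B.card + 1) = 2 * ∑ b ∈ B, (B.filter fun b' => id b' ≤ id b).card := hr.symm
    _ ≤ 2 * ∑ b ∈ B, (b + 1) := by
        apply Nat.mul_le_mul_left
        exact Finset.sum_le_sum hb
    _ = 2 * ∑ b ∈ B, b + 2 * B.card := by rw [Finset.sum_add_distrib]; ring_nf; simp [mul_comm]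

lemma gauss_Icc (t : ℕ) : 2 * ∑ k ∈ Finset.Icc 1 t, k = t * (t + 1) := by
  induction t with
  | zero => simp
  | succ n ih =>
    rw [Finset.sum_Icc_succ_top (by omega)]
    ring_nf
    ring_nf at ih
    omega


set_option maxHeartbeats 1600000 in
lemma forward_dir (t y : ℕ) (a : ℕ → ℕ) (ht : 1 ≤ t) (hy : 1 ≤ y)
    (hsum : ∑ i ∈ Finset.Icc 1 (3 * t), a i = t * y)
    (S : Fin t → Finset ℕ)
    (Sdisj : ∀ j k, j ≠ k → Disjoint (S j) (S k))
    (Sunion : Finset.univ.biUnion S = Finset.Icc 1 (3 * t))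
    (Ssum : ∀ j, ∑ i ∈ S j, a i = y) :
    ∃ σ, IsSchedule (Finset.Icc 1 (2*t) ∪ Finset.Icc (2*t+1) (5*t)) (p3P t y a) σ ∧
      Dsum (Finset.Icc 1 (2*t)) (p3P t y a) (pi3P t y) σ ≤ t^3*y + t*(t+1)/2 ∧
      Ttot (Finset.Icc 1 (2*t) ∪ Finset.Icc (2*t+1) (5*t)) (p3P t y a) (d3P t y) σ = 0 := by
  classical
  set B := t * y + 1 with hB
  -- group of a new-job index
  have hex : ∀ i ∈ Finset.Icc 1 (3*t), ∃ j : Fin t, i ∈ S j := by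
    intro i hi
    rw [← Sunion] at hi
    simpa using hi
  set grp : ℕ → Fin t := fun i => if h : ∃ j : Fin t, i ∈ S j then h.choose else ⟨0, ht⟩ with hgrpdef
  have hgrp : ∀ i ∈ Finset.Icc 1 (3*t), i ∈ S (grp i) := by
    intro i hi
    have h := hex i hi
    simp only [hgrpdef, dif_pos h]
    exact h.choose_spec
  have hSsub : ∀ j : Fin t, ∀ i ∈ S j, i ∈ Finset.Icc 1 (3*t) := by
    intro j i hi
    rw [← Sunion]
    exact Finset.mem_biUnion.2 ⟨j, Finset.mem_univ _, hi⟩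
  have hgrp_eq : ∀ j : Fin t, ∀ i ∈ S j, grp i = j := by
    intro j i hi
    by_contra hne
    exact Finset.disjoint_left.1 (Sdisj _ _ hne) (hgrp i (hSsub j i hi)) hi
  set off : ℕ → ℕ := fun i => ∑ i' ∈ (S (grp i)).filter (· < i), t * a i' with hoffdef
  have hSmass : ∀ j : Fin t, ∑ i ∈ S j, t * a i = t * y := by
    intro j
    rw [← Finset.mul_sum, Ssum j]
  have hofft : ∀ i ∈ Finset.Icc 1 (3*t), off i + t * a i ≤ t * y := by
    intro i hi
    have hiS := hgrp i hi
    have hsub : insert i ((S (grp i)).filter (· < i)) ⊆ S (grp i) := by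
      intro x hx
      rcases Finset.mem_insert.1 hx with rfl | hx
      · exact hiS
      · exact Finset.mem_of_mem_filter _ hx
    have hnot : i ∉ (S (grp i)).filter (· < i) := by
      simp
    calc off i + t * a i = ∑ i' ∈ insert i ((S (grp i)).filter (· < i)), t * a i' := by
          rw [Finset.sum_insert hnot]; ring
      _ ≤ ∑ i' ∈ S (grp i), t * a i' := Finset.sum_le_sum_of_subset hsub
      _ = t * y := hSmass _
  have hoff_mono : ∀ i i', i ∈ Finset.Icc 1 (3*t) → i' ∈ Finset.Icc 1 (3*t) →
      grp i = grp i' → i < i' → off i + t * a i ≤ off i' := by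
    intro i i' hi hi' hg hlt
    have hiS := hgrp i hi
    have hsub : insert i ((S (grp i)).filter (· < i)) ⊆ (S (grp i')).filter (· < i') := by
      intro x hx
      rw [← hg]
      rcases Finset.mem_insert.1 hx with rfl | hx
      · exact Finset.mem_filter.2 ⟨hiS, hlt⟩
      · have := Finset.mem_filter.1 hx
        exact Finset.mem_filter.2 ⟨this.1, by have := this.2; simp at this ⊢; omega⟩
    have hnot : i ∉ (S (grp i)).filter (· < i) := by simp
    calc off i + t * a i = ∑ i' ∈ insert i ((S (grp i)).filter (· < i)), t * a i' := by
          rw [Finset.sum_insert hnot]; ring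
      _ ≤ off i' := Finset.sum_le_sum_of_subset hsub
  set P := t * y with hP
  have hPpos : 1 ≤ P := Nat.mul_pos ht hy
  have hBval : B = P + 1 := rfl
  set σ : ℕ → ℕ := fun j => if j ≤ t then j * B - 1 else if j ≤ 2*t then t * B + (j - t - 1) * P
      else (grp (j - 2*t) : ℕ) * B + off (j - 2*t) with hσ
  have hmulB : ∀ u v : ℕ, u ≤ v → u * B ≤ v * B := fun u v h => Nat.mul_le_mul_right _ h
  have hmulP : ∀ u v : ℕ, u ≤ v → u * P ≤ v * P := fun u v h => Nat.mul_le_mul_right _ h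
  have hs : ∀ k, 1 ≤ k → k ≤ t → σ k + 1 = k * B ∧ p3P t y a k = 1 := by
    intro k h1 h2
    have hp : p3P t y a k = 1 := by simp [p3P, h2]
    have h1B : 1 ≤ k * B := Nat.mul_pos h1 (by omega)
    have : σ k = k * B - 1 := by simp only [hσ]; rw [if_pos h2]
    exact ⟨by omega, hp⟩
  have hl : ∀ k, 1 ≤ k → k ≤ t → σ (t + k) = t * B + (k-1) * P
      ∧ σ (t + k) + p3P t y a (t + k) = t * B + k * P := by
    intro k h1 h2
    have hc1 : ¬ (t + k ≤ t) := by omega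
    have hc2 : t + k ≤ 2 * t := by omega
    have hp : p3P t y a (t + k) = t * y := by simp [p3P, hc1, hc2]
    have hv : σ (t + k) = t * B + (t + k - t - 1) * P := by
      simp only [hσ]; rw [if_neg hc1, if_pos hc2]
    have he : t + k - t - 1 = k - 1 := by omega
    rw [he] at hv
    refine ⟨hv, ?_⟩
    rw [hv, hp, ← hP]
    have : (k - 1) * P + P = (k - 1 + 1) * P := (Nat.succ_mul _ _).symm
    rw [add_assoc, this]
    congr 2
    omega
  have hn : ∀ i0, 1 ≤ i0 → i0 ≤ 3*t → σ (2*t + i0) = (grp i0 : ℕ) * B + off i0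
      ∧ p3P t y a (2*t + i0) = t * a i0 ∧ off i0 + t * a i0 ≤ P ∧ (grp i0 : ℕ) + 1 ≤ t := by
    intro i0 h1 h2
    have hc1 : ¬ (2*t + i0 ≤ t) := by omega
    have hc2 : ¬ (2*t + i0 ≤ 2*t) := by omega
    have he : 2*t + i0 - 2*t = i0 := by omega
    have hp : p3P t y a (2*t + i0) = t * a i0 := by simp [p3P, hc1, hc2, he]
    have hv : σ (2*t + i0) = (grp i0 : ℕ) * B + off i0 := by
      simp only [hσ]; rw [if_neg hc1, if_neg hc2, he]
    exact ⟨hv, hp, hofft i0 (Finset.mem_Icc.2 ⟨h1, h2⟩), (grp i0).is_lt⟩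
  have hPval : P = t * y := hP
  clear hσ hgrpdef hoffdef hB hP
  have hgrplt : ∀ i0 : ℕ, (grp i0 : ℕ) < t := fun i0 => (grp i0).is_lt
  clear_value σ off grp P B
  clear hex
  refine ⟨σ, ?_, ?_, ?_⟩
  · -- IsSchedule
    intro i hi j hj hij
    simp only [Finset.mem_union, Finset.mem_Icc] at hi hj
    rcases show (1 ≤ i ∧ i ≤ t) ∨ (1 ≤ i - t ∧ i - t ≤ t ∧ i = t + (i - t))
        ∨ (1 ≤ i - 2*t ∧ i - 2*t ≤ 3*t ∧ i = 2*t + (i - 2*t)) from by omega with hiC | ⟨hi1, hi2, hie⟩ | ⟨hi1, hi2, hie⟩ <;>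
      rcases show (1 ≤ j ∧ j ≤ t) ∨ (1 ≤ j - t ∧ j - t ≤ t ∧ j = t + (j - t))
        ∨ (1 ≤ j - 2*t ∧ j - 2*t ≤ 3*t ∧ j = 2*t + (j - 2*t)) from by omega with hjC | ⟨hj1, hj2, hje⟩ | ⟨hj1, hj2, hje⟩
    -- case (s,s)
    · obtain ⟨ei, pi⟩ := hs i hiC.1 hiC.2
      obtain ⟨ej, pj⟩ := hs j hjC.1 hjC.2
      rcases lt_or_gt_of_ne hij with h | h
      · left; rw [pi]
        have h1 := hmulB (i+1) j (by omega)
        have h2 : (i+1) * B = i * B + B := by ring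
        linarith
      · right; rw [pj]
        have h1 := hmulB (j+1) i (by omega)
        have h2 : (j+1) * B = j * B + B := by ring
        linarith
    -- case (s,l)
    · obtain ⟨ei, pi⟩ := hs i hiC.1 hiC.2
      obtain ⟨vj, ej⟩ := hl (j - t) hj1 hj2
      rw [← hje] at vj ej
      left; rw [pi]
      have h1 := hmulB i t hiC.2
      have h0 := Nat.zero_le ((j - t - 1) * P)
      linarith
    -- case (s,n)
    · obtain ⟨ei, pi⟩ := hs i hiC.1 hiC.2
      obtain ⟨vj, pj, oj, gj⟩ := hn (j - 2*t) hj1 hj2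
      rw [← hje] at vj pj
      by_cases hgi : i ≤ (grp (j - 2*t) : ℕ)
      · left; rw [pi]
        have h1 := hmulB i _ hgi
        linarith
      · right
        rw [pj, vj]
        have h1 := hmulB ((grp (j - 2*t) : ℕ)+1) i (by omega)
        have h2 : ((grp (j - 2*t) : ℕ)+1) * B = (grp (j - 2*t) : ℕ) * B + B := by ring
        linarith
    -- case (l,s)
    · obtain ⟨vi, ei⟩ := hl (i - t) hi1 hi2
      rw [← hie] at vi ei
      obtain ⟨ej, pj⟩ := hs j hjC.1 hjC.2
      right; rw [pj]
      have h1 := hmulB j t hjC.2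
      have h0 := Nat.zero_le ((i - t - 1) * P)
      linarith
    -- case (l,l)
    · obtain ⟨vi, ei⟩ := hl (i - t) hi1 hi2
      rw [← hie] at vi ei
      obtain ⟨vj, ej⟩ := hl (j - t) hj1 hj2
      rw [← hje] at vj ej
      rcases lt_or_gt_of_ne hij with h | h
      · left
        have h1 := hmulP (i - t) (j - t - 1) (by omega)
        have h2 : j - t - 1 = j - t - 1 := rfl
        rw [vj, ei]
        linarith
      · right
        have h1 := hmulP (j - t) (i - t - 1) (by omega)
        rw [vi, ej]
        linarith
    -- case (l,n)
    · obtain ⟨vi, ei⟩ := hl (i - t) hi1 hi2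
      rw [← hie] at vi ei
      obtain ⟨vj, pj, oj, gj⟩ := hn (j - 2*t) hj1 hj2
      rw [← hje] at vj pj
      right
      rw [pj, vj, vi]
      have h1 := hmulB ((grp (j - 2*t) : ℕ)+1) t gj
      have h2 : ((grp (j - 2*t) : ℕ)+1) * B = (grp (j - 2*t) : ℕ) * B + B := by ring
      have h0 := Nat.zero_le ((i - t - 1) * P)
      linarith
    -- case (n,s)
    · obtain ⟨vi, pi, oi, gi⟩ := hn (i - 2*t) hi1 hi2
      rw [← hie] at vi pi
      obtain ⟨ej, pj⟩ := hs j hjC.1 hjC.2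
      by_cases hgj : j ≤ (grp (i - 2*t) : ℕ)
      · right; rw [pj]
        have h1 := hmulB j _ hgj
        linarith
      · left
        rw [pi, vi]
        have h1 := hmulB ((grp (i - 2*t) : ℕ)+1) j (by omega)
        have h2 : ((grp (i - 2*t) : ℕ)+1) * B = (grp (i - 2*t) : ℕ) * B + B := by ring
        linarith
    -- case (n,l)
    · obtain ⟨vi, pi, oi, gi⟩ := hn (i - 2*t) hi1 hi2
      rw [← hie] at vi pi
      obtain ⟨vj, ej⟩ := hl (j - t) hj1 hj2
      rw [← hje] at vj ej
      left
      rw [pi, vi, vj]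
      have h1 := hmulB ((grp (i - 2*t) : ℕ)+1) t gi
      have h2 : ((grp (i - 2*t) : ℕ)+1) * B = (grp (i - 2*t) : ℕ) * B + B := by ring
      have h0 := Nat.zero_le ((j - t - 1) * P)
      linarith
    -- case (n,n)
    · obtain ⟨vi, pi, oi, gi⟩ := hn (i - 2*t) hi1 hi2
      rw [← hie] at vi pi
      obtain ⟨vj, pj, oj, gj⟩ := hn (j - 2*t) hj1 hj2
      rw [← hje] at vj pj
      have hmemi : i - 2*t ∈ Finset.Icc 1 (3*t) := Finset.mem_Icc.2 ⟨hi1, hi2⟩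
      have hmemj : j - 2*t ∈ Finset.Icc 1 (3*t) := Finset.mem_Icc.2 ⟨hj1, hj2⟩
      by_cases hgg : grp (i - 2*t) = grp (j - 2*t)
      · have hne : i - 2*t ≠ j - 2*t := by omega
        rcases lt_or_gt_of_ne hne with h | h
        · left
          have := hoff_mono (i - 2*t) (j - 2*t) hmemi hmemj hgg h
          rw [pi, vi, vj, hgg]
          linarith
        · right
          have := hoff_mono (j - 2*t) (i - 2*t) hmemj hmemi hgg.symm h
          rw [pj, vj, vi, hgg]
          linarith
      · have hne : (grp (i - 2*t) : ℕ) ≠ (grp (j - 2*t) : ℕ) := fun h => hgg (Fin.ext h)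
        rcases lt_or_gt_of_ne hne with h | h
        · left
          rw [pi, vi, vj]
          have h1 := hmulB ((grp (i - 2*t) : ℕ)+1) ((grp (j - 2*t) : ℕ)) (by omega)
          have h2 : ((grp (i - 2*t) : ℕ)+1) * B = (grp (i - 2*t) : ℕ) * B + B := by ring
          linarith
        · right
          rw [pj, vj, vi]
          have h1 := hmulB ((grp (j - 2*t) : ℕ)+1) ((grp (i - 2*t) : ℕ)) (by omega)
          have h2 : ((grp (j - 2*t) : ℕ)+1) * B = (grp (j - 2*t) : ℕ) * B + B := by ring
          linarith
  · -- Dsum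
    have hsplit : Finset.Icc 1 (2*t) = Finset.Icc 1 t ∪ Finset.Icc (t+1) (2*t) := by
      ext x; simp only [Finset.mem_union, Finset.mem_Icc]; omega
    have hdisjI : Disjoint (Finset.Icc 1 t) (Finset.Icc (t+1) (2*t)) := by
      rw [Finset.disjoint_left]; intro x hx hx'
      simp only [Finset.mem_Icc] at hx hx'; omega
    rw [Dsum, hsplit, Finset.sum_union hdisjI]
    have hshort0 : ∀ k ∈ Finset.Icc 1 t, disr (p3P t y a) (pi3P t y) σ k = 0 := by
      intro k hk
      rw [Finset.mem_Icc] at hk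
      obtain ⟨ek, pk⟩ := hs k hk.1 hk.2
      have hπ : pi3P t y k + p3P t y a k = k * B := by
        rw [pk]
        simp only [pi3P, if_pos hk.2, ← hPval, hBval]
        have e : (k - 1 + 1) * (P+1) = (k-1)*(P+1) + (P+1) := Nat.succ_mul _ _
        have e2 : k - 1 + 1 = k := by omega
        rw [e2] at e
        rw [e]
        ring
      have hC : σ k + p3P t y a k = k * B := by rw [pk]; omega
      rw [disr, hC, hπ]
      simp
    rw [Finset.sum_eq_zero hshort0, zero_add]
    have hemb : Finset.Icc (t+1) (2*t)
        = (Finset.range t).map ⟨fun k => t + 1 + k, add_right_injective (t + 1)⟩ := by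
      ext x
      simp only [Finset.mem_map, Finset.mem_range, Function.Embedding.coeFn_mk, Finset.mem_Icc]
      constructor
      · intro hx; exact ⟨x - t - 1, by omega, by omega⟩
      · rintro ⟨k, hk, rfl⟩; omega
    rw [hemb, Finset.sum_map]
    simp only [Function.Embedding.coeFn_mk]
    have hterm : ∀ k ∈ Finset.range t, (disr (p3P t y a) (pi3P t y) σ (t+1+k) : ℤ)
        = (t:ℤ) * B - k := by
      intro k hk
      rw [Finset.mem_range] at hk
      have he : t + 1 + k = t + (k+1) := by omega
      obtain ⟨vk, ek⟩ := hl (k+1) (by omega) (by omega)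
      have hπ : pi3P t y (t+1+k) + p3P t y a (t+1+k) = k * (P+1) + P := by
        have hc1 : ¬ (t+1+k ≤ t) := by omega
        have hc2 : t+1+k ≤ 2*t := by omega
        have he2 : t+1+k-t-1 = k := by omega
        simp only [pi3P, p3P, if_neg hc1, if_pos hc2, he2, ← hPval]
      have hC : σ (t+1+k) + p3P t y a (t+1+k) = t*B + (k+1)*P := by rw [he]; exact ek
      rw [disr, hC, hπ]
      have hge : k*(P+1) + P ≤ t*B + (k+1)*P := by
        have h1 : k*(P+1) = k*P + k := by ring
        have h2 : (k+1)*P = k*P + P := by ring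
        have h3 : t ≤ t * B := Nat.le_mul_of_pos_right t (by omega)
        linarith
      rw [Int.natAbs_of_nonneg (sub_nonneg.2 (Int.ofNat_le.2 hge))]
      push_cast
      ring
    have hcastsum : ((∑ k ∈ Finset.range t, disr (p3P t y a) (pi3P t y) σ (t+1+k) : ℕ) : ℤ)
        = ∑ k ∈ Finset.range t, ((t:ℤ)*B - k) := by
      push_cast
      exact Finset.sum_congr rfl (fun k hk => by
        have := hterm k hk
        push_cast at this ⊢
        exact this)
    have hgaussN := Finset.sum_range_id_mul_two t
    have hgauss : (∑ k ∈ Finset.range t, (k:ℤ)) * 2 = (t:ℤ)*t - t := by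
      have h1 : ((∑ i ∈ Finset.range t, i : ℕ) : ℤ) * 2 = ((t * (t-1) : ℕ) : ℤ) := by
        exact_mod_cast congrArg (fun n : ℕ => (n : ℤ)) hgaussN
      push_cast [Nat.cast_sub ht] at h1
      push_cast
      linarith
    have hBz : (B:ℤ) = (t:ℤ)*y + 1 := by rw [hBval, hPval]; push_cast; ring
    have hfin : 2 * ((∑ k ∈ Finset.range t, disr (p3P t y a) (pi3P t y) σ (t+1+k) : ℕ) : ℤ)
        = 2*(t:ℤ)^3*y + t*t + t := by
      rw [hcastsum, Finset.sum_sub_distrib, Finset.sum_const, Finset.card_range, nsmul_eq_mul]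
      linear_combination 2*(t:ℤ)^2*hBz - hgauss
    have hfinN : 2 * (∑ k ∈ Finset.range t, disr (p3P t y a) (pi3P t y) σ (t+1+k))
        = 2*(t^3*y) + t*(t+1) := by
      have hr : 2*(t^3*y) + t*(t+1) = 2*(t^3*y) + t*t + t := by ring
      rw [hr]
      zify
      push_cast
      push_cast at hfin
      linarith
    have hm : (t*(t+1)/2) * 2 = t*(t+1) := Nat.div_mul_cancel (Nat.even_mul_succ_self t).two_dvd
    set X := t^3*y with hX
    set u := t*(t+1) with hu
    omega
  · -- Ttot
    rw [Ttot]
    apply Finset.sum_eq_zero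
    intro j hj
    simp only [Finset.mem_union, Finset.mem_Icc] at hj
    have h2ty : 2*t*y = P + P := by rw [hPval]; ring
    have hle : ((σ j + p3P t y a j : ℕ) : ℤ) ≤ d3P t y j := by
      rcases show (1 ≤ j ∧ j ≤ t) ∨ (1 ≤ j - t ∧ j - t ≤ t ∧ j = t + (j - t))
          ∨ (1 ≤ j - 2*t ∧ j - 2*t ≤ 3*t ∧ j = 2*t + (j - 2*t)) from by omega
          with hC | ⟨h1, h2, he⟩ | ⟨h1, h2, he⟩
      · obtain ⟨ej, pj⟩ := hs j hC.1 hC.2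
        have hd : d3P t y j = (t:ℤ)*(2*t*y+1) := by
          simp [d3P, show j ≤ 2*t by omega]
        have hC' : σ j + p3P t y a j = j * B := by rw [pj]; omega
        rw [hC', hd]
        have hh1 : j * B ≤ t * B := Nat.mul_le_mul_right _ hC.2
        have hh2 : t * B ≤ t * (2*t*y+1) := by
          apply Nat.mul_le_mul_left
          rw [hBval, h2ty]; omega
        calc ((j * B : ℕ) : ℤ) ≤ ((t * (2*t*y+1) : ℕ) : ℤ) := Int.ofNat_le.2 (hh1.trans hh2)
          _ = (t:ℤ)*(2*t*y+1) := by push_cast; ring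
      · obtain ⟨vj, ej⟩ := hl (j - t) h1 h2
        rw [← he] at vj ej
        have hd : d3P t y j = (t:ℤ)*(2*t*y+1) := by
          simp [d3P, show j ≤ 2*t by omega]
        rw [ej, hd]
        have hh1 : (j-t)*P ≤ t*P := hmulP _ _ h2
        have hh2 : t*B + t*P = t*(2*t*y+1) := by rw [hBval, h2ty]; ring
        calc ((t*B + (j-t)*P : ℕ) : ℤ) ≤ ((t*(2*t*y+1) : ℕ) : ℤ) := by
              apply Int.ofNat_le.2; omega
          _ = (t:ℤ)*(2*t*y+1) := by push_cast; ring
      · obtain ⟨vj, pj, oj, gj⟩ := hn (j - 2*t) h1 h2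
        rw [← he] at vj pj
        have hd : d3P t y j = (t:ℤ)^2*y + t - 1 := by
          simp [d3P, show ¬ (j ≤ 2*t) by omega]
        rw [hd]
        have hgB : ((grp (j - 2*t) : ℕ) + 1) * B ≤ t * B :=
          Nat.mul_le_mul_right _ gj
        have hgB2 : ((grp (j - 2*t) : ℕ) + 1) * B = (grp (j - 2*t) : ℕ) * B + B := by ring
        have htB : t * B = t*t*y + t := by rw [hBval, hPval]; ring
        have hCle : σ j + p3P t y a j + 1 ≤ t*t*y + t := by
          rw [vj, pj, ← htB]
          have := hBval
          linarith
        have : ((σ j + p3P t y a j : ℕ) : ℤ) + 1 ≤ ((t*t*y + t : ℕ) : ℤ) := by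
          exact_mod_cast hCle
        have he2 : ((t*t*y + t : ℕ) : ℤ) = (t:ℤ)^2*y + t := by push_cast; ring
        linarith
    have hns : ((σ j + p3P t y a j : ℕ) : ℤ) - d3P t y j ≤ 0 := by linarith
    exact max_eq_left hns


set_option maxHeartbeats 2000000 in
lemma backward_dir (t y : ℕ) (a : ℕ → ℕ) (ht : 1 ≤ t) (hy : 1 ≤ y)
    (ha : ∀ i ∈ Finset.Icc 1 (3 * t), 0 < a i)
    (hsum : ∑ i ∈ Finset.Icc 1 (3 * t), a i = t * y)
    (σ : ℕ → ℕ)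
    (hsch : IsSchedule (Finset.Icc 1 (2*t) ∪ Finset.Icc (2*t+1) (5*t)) (p3P t y a) σ)
    (hD : Dsum (Finset.Icc 1 (2*t)) (p3P t y a) (pi3P t y) σ ≤ t^3*y + t*(t+1)/2)
    (hT : Ttot (Finset.Icc 1 (2*t) ∪ Finset.Icc (2*t+1) (5*t)) (p3P t y a) (d3P t y) σ = 0) :
    ∃ S : Fin t → Finset ℕ,
        (∀ j k, j ≠ k → Disjoint (S j) (S k)) ∧
        Finset.univ.biUnion S = Finset.Icc 1 (3 * t) ∧
        ∀ j, ∑ i ∈ S j, a i = y := by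
  classical
  rcases eq_or_lt_of_le ht with ht1 | ht2
  · -- t = 1 : trivial partition
    refine ⟨fun _ => Finset.Icc 1 (3*t), ?_, ?_, ?_⟩
    · intro j k hjk
      exfalso
      apply hjk
      apply Fin.ext
      have hj := j.isLt
      have hk := k.isLt
      omega
    · ext x
      simp only [Finset.mem_biUnion, Finset.mem_univ, true_and]
      constructor
      · rintro ⟨j, hj⟩; exact hj
      · intro hx; exact ⟨⟨0, ht⟩, hx⟩
    · intro j
      rw [hsum, ← ht1, one_mul]
  -- main case : t ≥ 2
  have hP2 : 2 ≤ t * y := by nlinarith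
  -- abbreviations
  set U := Finset.Icc 1 (2*t) ∪ Finset.Icc (2*t+1) (5*t) with hU
  set Sh := Finset.Icc 1 t with hSh
  set Lg := Finset.Icc (t+1) (2*t) with hLg
  set Nw := Finset.Icc (2*t+1) (5*t) with hNw
  set C : ℕ → ℕ := fun j => σ j + p3P t y a j with hC
  have hCdef : ∀ j, C j = σ j + p3P t y a j := fun _ => rfl
  clear_value C
  have hShU : Sh ⊆ U := by
    intro x hx; simp only [hSh, hU, Finset.mem_union, Finset.mem_Icc] at *; omega
  have hLgU : Lg ⊆ U := by
    intro x hx; simp only [hLg, hU, Finset.mem_union, Finset.mem_Icc] at *; omega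
  have hNwU : Nw ⊆ U := by
    intro x hx; simp only [hNw, hU, Finset.mem_union, Finset.mem_Icc] at *; omega
  have hpS : ∀ s ∈ Sh, p3P t y a s = 1 := by
    intro s hs; simp only [hSh, Finset.mem_Icc] at hs; simp [p3P, hs.2]
  have hpL : ∀ l ∈ Lg, p3P t y a l = t*y := by
    intro l hl; simp only [hLg, Finset.mem_Icc] at hl
    simp [p3P, show ¬ (l ≤ t) by omega, show l ≤ 2*t by omega]
  have hpN : ∀ n ∈ Nw, p3P t y a n = t * a (n - 2*t) ∧ 0 < p3P t y a n := by
    intro n hn; simp only [hNw, Finset.mem_Icc] at hn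
    have hpe : p3P t y a n = t * a (n - 2*t) := by
      simp [p3P, show ¬ (n ≤ t) by omega, show ¬ (n ≤ 2*t) by omega]
    refine ⟨hpe, ?_⟩
    rw [hpe]
    exact Nat.mul_pos ht (ha _ (Finset.mem_Icc.2 ⟨by omega, by omega⟩))
  have hppos : ∀ j ∈ U, 0 < p3P t y a j := by
    intro j hj
    simp only [hU, Finset.mem_union, Finset.mem_Icc] at hj
    rcases show (j ∈ Sh) ∨ (j ∈ Lg) ∨ (j ∈ Nw) from by
      simp only [hSh, hLg, hNw, Finset.mem_Icc]
      simp only [hNw, Finset.mem_Icc] at hj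
      omega with h | h | h
    · rw [hpS j h]; omega
    · rw [hpL j h]; omega
    · exact (hpN j h).2
  -- new jobs total mass
  have hemb3 : Nw = (Finset.Icc 1 (3*t)).map ⟨fun i => 2*t + i, add_right_injective (2*t)⟩ := by
    ext x
    simp only [hNw, Finset.mem_map, Function.Embedding.coeFn_mk, Finset.mem_Icc]
    constructor
    · intro hx; exact ⟨x - 2*t, ⟨by omega, by omega⟩, by omega⟩
    · rintro ⟨i, hi, rfl⟩; omega
  have hNmass : ∑ n ∈ Nw, p3P t y a n = t * (t*y) := by
    rw [hemb3, Finset.sum_map]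
    simp only [Function.Embedding.coeFn_mk]
    have : ∀ i ∈ Finset.Icc 1 (3*t), p3P t y a (2*t + i) = t * a i := by
      intro i hi
      simp only [Finset.mem_Icc] at hi
      simp [p3P, show ¬ (2*t + i ≤ t) by omega, show ¬ (2*t + i ≤ 2*t) by omega]
    rw [Finset.sum_congr rfl this, ← Finset.mul_sum, hsum]
  -- tardiness zero: everyone on time
  have hTle : ∀ j ∈ U, ((C j : ℕ) : ℤ) ≤ d3P t y j := by
    intro j hj
    have hnn : ∀ j ∈ U, (0:ℤ) ≤ max 0 (((σ j + p3P t y a j : ℕ) : ℤ) - d3P t y j) :=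
      fun j _ => le_max_left _ _
    have h0 := (Finset.sum_eq_zero_iff_of_nonneg hnn).1 hT j hj
    have hle : ((σ j + p3P t y a j : ℕ) : ℤ) - d3P t y j ≤ 0 := max_eq_left_iff.mp h0
    simp only [hCdef]
    linarith
  -- new jobs finish before T0 = t*t*y + t
  have hNle : ∀ n ∈ Nw, C n + 1 ≤ t*t*y + t := by
    intro n hn
    have h1 := hTle n (hNwU hn)
    have hd : d3P t y n = (t:ℤ)^2*y + t - 1 := by
      simp only [hNw, Finset.mem_Icc] at hn
      simp [d3P, show ¬ (n ≤ 2*t) by omega]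
    rw [hd] at h1
    have h2 : ((C n + 1 : ℕ) : ℤ) ≤ ((t*t*y + t : ℕ) : ℤ) := by push_cast; nlinarith
    exact_mod_cast h2
  -- long jobs finish at or after T0
  have hLge : ∀ l ∈ Lg, t*t*y + t ≤ C l := by
    intro l hl
    by_contra hcon
    push_neg at hcon
    have hlN : l ∉ Nw := by
      simp only [hLg, Finset.mem_Icc] at hl
      simp only [hNw, Finset.mem_Icc]; omega
    have hpack := packing_lemma (insert l Nw) (p3P t y a) σ
        (hsch.mono (by
          intro x hx
          rcases Finset.mem_insert.1 hx with rfl | hx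
          · exact hLgU hl
          · exact hNwU hx))
        0 (t*t*y + t - 1)
        (by
          intro j hj
          rcases Finset.mem_insert.1 hj with rfl | hj
          · refine ⟨Nat.zero_le _, ?_⟩
            have : σ j + p3P t y a j = C j := (hCdef j).symm
            omega
          · have := hNle j hj
            have : σ j + p3P t y a j = C j := (hCdef j).symm
            constructor
            · exact Nat.zero_le _
            · have h2 := hNle j hj
              simp only [hCdef] at h2 ⊢
              omega)
    rw [Finset.sum_insert hlN, hNmass, hpL l hl] at hpack
    have hle : t ≤ t*y := Nat.le_mul_of_pos_right t hy
    have h1 : t*(t*y) = t*t*y := by ring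
    have h3 : ∀ M : ℕ, M + t - 1 - 0 + 1 ≤ M + t := fun M => by omega
    linarith [h3 (t*t*y), hpack, h1, hle]

  -- distinct completions
  have hdist : ∀ i ∈ U, ∀ j ∈ U, i ≠ j → C i ≠ C j := by
    intro i hi j hj hij
    simp only [hCdef]
    exact distinct_completions U (p3P t y a) σ hsch hppos hi hj hij
  have hcardLg : Lg.card = t := by rw [hLg, Nat.card_Icc]; omega
  have hcardSh : Sh.card = t := by rw [hSh, Nat.card_Icc]; omega
  -- per-long packing bound
  have hCL : ∀ l ∈ Lg, t*(t*y) + (Sh.filter fun s => C s ≤ C l).card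
      + (t*y) * (Lg.filter fun l' => C l' ≤ C l).card ≤ C l := by
    intro l hl
    have hT0l := hLge l hl
    set F1 := Sh.filter (fun s => C s ≤ C l) with hF1
    set F2 := Lg.filter (fun l' => C l' ≤ C l) with hF2
    have hF1Sh : F1 ⊆ Sh := Finset.filter_subset _ _
    have hF2Lg : F2 ⊆ Lg := Finset.filter_subset _ _
    have hd1 : Disjoint Nw F1 := by
      rw [Finset.disjoint_left]
      intro x hx hx'
      have h1 : x ∈ Sh := hF1Sh hx'
      simp only [hNw, Finset.mem_Icc] at hx
      simp only [hSh, Finset.mem_Icc] at h1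
      omega
    have hd2 : Disjoint (Nw ∪ F1) F2 := by
      rw [Finset.disjoint_left]
      intro x hx hx'
      have h2 : x ∈ Lg := hF2Lg hx'
      simp only [hLg, Finset.mem_Icc] at h2
      rcases Finset.mem_union.1 hx with hx | hx
      · simp only [hNw, Finset.mem_Icc] at hx; omega
      · have := hF1Sh hx; simp only [hSh, Finset.mem_Icc] at this; omega
    have hsub : Nw ∪ F1 ∪ F2 ⊆ U := by
      intro x hx
      rcases Finset.mem_union.1 hx with hx | hx
      · rcases Finset.mem_union.1 hx with hx | hx
        · exact hNwU hx
        · exact hShU (hF1Sh hx)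
      · exact hLgU (hF2Lg hx)
    have hpack := packing_lemma (Nw ∪ F1 ∪ F2) (p3P t y a) σ (hsch.mono hsub) 0 (C l)
      (by
        intro x hx
        refine ⟨Nat.zero_le _, ?_⟩
        rcases Finset.mem_union.1 hx with hx | hx
        · rcases Finset.mem_union.1 hx with hx | hx
          · have h1 := hNle x hx
            have h2 : σ x + p3P t y a x = C x := (hCdef x).symm
            linarith
          · have := (Finset.mem_filter.1 hx).2
            simp only [hCdef] at this ⊢
            omega
        · have := (Finset.mem_filter.1 hx).2
          simp only [hCdef] at this ⊢
          omega)
    rw [Finset.sum_union hd2, Finset.sum_union hd1, hNmass] at hpack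
    have hs1 : ∑ x ∈ F1, p3P t y a x = F1.card := by
      rw [Finset.sum_congr rfl (fun x hx => hpS x (hF1Sh hx))]
      simp
    have hs2 : ∑ x ∈ F2, p3P t y a x = F2.card * (t*y) := by
      rw [Finset.sum_congr rfl (fun x hx => hpL x (hF2Lg hx))]
      simp [mul_comm]
    rw [hs1, hs2, Nat.sub_zero] at hpack
    calc t*(t*y) + F1.card + (t*y) * F2.card
        = t*(t*y) + F1.card + F2.card * (t*y) := by ring
      _ ≤ C l := hpack
  -- rank sum over longs
  have hRankL : 2 * ∑ l ∈ Lg, (Lg.filter fun l' => C l' ≤ C l).card = t*(t+1) := by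
    have := rank_sum Lg C (fun i hi j hj hij => hdist i (hLgU hi) j (hLgU hj) hij)
    rwa [hcardLg] at this
  -- swap double count
  have hswap : ∑ l ∈ Lg, (Sh.filter fun s => C s ≤ C l).card
      = ∑ s ∈ Sh, (Lg.filter fun l => C s ≤ C l).card := by
    calc ∑ l ∈ Lg, (Sh.filter fun s => C s ≤ C l).card
        = ∑ l ∈ Lg, ∑ s ∈ Sh, if C s ≤ C l then 1 else 0 :=
          Finset.sum_congr rfl (fun l _ => Finset.card_filter _ _)
      _ = ∑ s ∈ Sh, ∑ l ∈ Lg, if C s ≤ C l then 1 else 0 := Finset.sum_comm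
      _ = ∑ s ∈ Sh, (Lg.filter fun l => C s ≤ C l).card :=
          Finset.sum_congr rfl (fun s _ => (Finset.card_filter _ _).symm)
  -- complement count
  have hr_compl : ∀ s ∈ Sh, (Lg.filter fun l => C s ≤ C l).card
      + (Lg.filter fun l => C l < C s).card = t := by
    intro s hs
    have h1 := Finset.card_filter_add_card_filter_not (s := Lg)
      (p := fun l => C s ≤ C l)
    have h2 : Lg.filter (fun l => ¬ (C s ≤ C l)) = Lg.filter (fun l => C l < C s) := by
      apply Finset.filter_congr
      intro l _
      simp [not_le]
    rw [h2, hcardLg] at h1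
    exact h1
  have hswapR : (∑ l ∈ Lg, (Sh.filter fun s => C s ≤ C l).card)
      + (∑ s ∈ Sh, (Lg.filter fun l => C l < C s).card) = t*t := by
    rw [hswap, ← Finset.sum_add_distrib]
    rw [Finset.sum_congr rfl hr_compl]
    rw [Finset.sum_const, hcardSh, smul_eq_mul]
  -- disruption bounds completion
  have hdl : ∀ l ∈ U, C l ≤ pi3P t y l + p3P t y a l + disr (p3P t y a) (pi3P t y) σ l := by
    intro l _
    simp only [hC, disr]
    omega
  -- old-schedule completions of long jobs
  have hemb2 : Lg = (Finset.range t).map ⟨fun k => t + 1 + k, add_right_injective (t + 1)⟩ := by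
    ext x
    simp only [hLg, Finset.mem_map, Function.Embedding.coeFn_mk, Finset.mem_Icc,
      Finset.mem_range]
    constructor
    · intro hx; exact ⟨x - t - 1, by omega, by omega⟩
    · rintro ⟨k, hk, rfl⟩; omega
  have htt : t*(t-1) + t = t*t := by
    obtain ⟨n, rfl⟩ : ∃ n, t = n+1 := ⟨t-1, by omega⟩
    simp [Nat.succ_sub_one]
    ring
  have hSumCπ : 2 * (∑ l ∈ Lg, (pi3P t y l + p3P t y a l)) + (t*y+1)*t
      = (t*y+1)*(t*t) + 2*(t*(t*y)) := by
    have hval : ∀ k ∈ Finset.range t, pi3P t y (t+1+k) + p3P t y a (t+1+k)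
        = k*(t*y+1) + t*y := by
      intro k hk
      rw [Finset.mem_range] at hk
      have hc1 : ¬ (t+1+k ≤ t) := by omega
      have hc2 : t+1+k ≤ 2*t := by omega
      have he2 : t+1+k-t-1 = k := by omega
      simp only [pi3P, p3P, if_neg hc1, if_pos hc2, he2]
    rw [hemb2, Finset.sum_map]
    simp only [Function.Embedding.coeFn_mk]
    rw [Finset.sum_congr rfl hval, Finset.sum_add_distrib, Finset.sum_const,
      Finset.card_range, ← Finset.sum_mul, smul_eq_mul]
    have hg := Finset.sum_range_id_mul_two t
    -- (∑ k in range t, k) * 2 = t * (t-1)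
    have expand : 2 * ((∑ k ∈ Finset.range t, k) * (t*y+1) + t * (t*y))
        = (t*(t-1)) * (t*y+1) + 2*(t*(t*y)) := by
      rw [← hg]; ring
    rw [expand]
    calc t*(t-1) * (t*y+1) + 2*(t*(t*y)) + (t*y+1)*t
        = (t*(t-1) + t) * (t*y+1) + 2*(t*(t*y)) := by ring
      _ = (t*y+1)*(t*t) + 2*(t*(t*y)) := by rw [htt]; ring
  -- split the disruption sum
  have hsplit2 : Finset.Icc 1 (2*t) = Sh ∪ Lg := by
    rw [hSh, hLg]; ext x; simp only [Finset.mem_union, Finset.mem_Icc]; omega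
  have hdisjSL : Disjoint Sh Lg := by
    rw [hSh, hLg, Finset.disjoint_left]
    intro x hx hx'
    simp only [Finset.mem_Icc] at hx hx'; omega
  have hDsum2 : 2 * (∑ s ∈ Sh, disr (p3P t y a) (pi3P t y) σ s)
      + 2 * (∑ l ∈ Lg, disr (p3P t y a) (pi3P t y) σ l) ≤ 2*(t^3*y) + t*(t+1) := by
    have hDs : Dsum (Finset.Icc 1 (2*t)) (p3P t y a) (pi3P t y) σ
        = (∑ s ∈ Sh, disr (p3P t y a) (pi3P t y) σ s)
          + (∑ l ∈ Lg, disr (p3P t y a) (pi3P t y) σ l) := by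
      rw [Dsum, hsplit2, Finset.sum_union hdisjSL]
    rw [hDs] at hD
    have heven : (t*(t+1)) % 2 = 0 := Nat.even_iff.1 (Nat.even_mul_succ_self t)
    have key : ∀ u X D : ℕ, D ≤ X + u/2 → u % 2 = 0 → 2*D ≤ 2*X + u := by
      intro u X D h1 h2; omega
    have := key (t*(t+1)) (t^3*y) _ hD heven
    linarith
  -- KEY INEQUALITY (8):  Σ_Sh disr ≤ Σ_Sh r
  have hkey8 : (∑ s ∈ Sh, disr (p3P t y a) (pi3P t y) σ s)
      ≤ ∑ s ∈ Sh, (Lg.filter fun l => C l < C s).card := by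
    have hSumCL : t*(t*(t*y)) + (∑ l ∈ Lg, (Sh.filter fun s => C s ≤ C l).card)
        + (t*y) * (∑ l ∈ Lg, (Lg.filter fun l' => C l' ≤ C l).card) ≤ ∑ l ∈ Lg, C l := by
      have h1 := Finset.sum_le_sum hCL
      have h2 : ∑ l ∈ Lg, (t*(t*y) + (Sh.filter fun s => C s ≤ C l).card
          + (t*y) * (Lg.filter fun l' => C l' ≤ C l).card)
          = t*(t*(t*y)) + (∑ l ∈ Lg, (Sh.filter fun s => C s ≤ C l).card)
            + (t*y) * (∑ l ∈ Lg, (Lg.filter fun l' => C l' ≤ C l).card) := by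
        rw [Finset.sum_add_distrib, Finset.sum_add_distrib, Finset.sum_const, hcardLg,
          smul_eq_mul, ← Finset.mul_sum]
      rw [h2] at h1
      exact h1
    have hSumdl : ∑ l ∈ Lg, C l ≤ (∑ l ∈ Lg, (pi3P t y l + p3P t y a l))
        + ∑ l ∈ Lg, disr (p3P t y a) (pi3P t y) σ l := by
      rw [← Finset.sum_add_distrib]
      exact Finset.sum_le_sum (fun l hl => hdl l (hLgU hl))
    have hRankLP : (t*y) * (2 * ∑ l ∈ Lg, (Lg.filter fun l' => C l' ≤ C l).card)
        = (t*y) * (t*(t+1)) := by rw [hRankL]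
    linarith [hSumCL, hSumdl, hSumCπ, hRankLP, hDsum2, hswapR]

  -- completion of shorts in the initial schedule
  have hπS : ∀ s ∈ Sh, pi3P t y s + p3P t y a s = s*(t*y+1) := by
    intro s hs
    have hmem := hs
    simp only [hSh, Finset.mem_Icc] at hmem
    rw [hpS s hs]
    simp only [pi3P, if_pos hmem.2]
    have e : s*(t*y+1) = (s-1)*(t*y+1) + (t*y+1) := by
      have e2 : s = s-1+1 := by omega
      calc s*(t*y+1) = (s-1+1)*(t*y+1) := by rw [← e2]
        _ = (s-1)*(t*y+1) + (t*y+1) := Nat.succ_mul _ _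
    rw [e]
    ring
  -- no short job completes after a long job
  have hrzero : ∀ s ∈ Sh, (Lg.filter fun l => C l < C s).card = 0 := by
    by_contra hcon
    push_neg at hcon
    obtain ⟨s0, hs0Sh, hs0⟩ := hcon
    set A := Sh.filter (fun s => 0 < (Lg.filter fun l => C l < C s).card) with hA
    have hASh : A ⊆ Sh := Finset.filter_subset _ _
    have hAne : A.Nonempty := ⟨s0, Finset.mem_filter.2 ⟨hs0Sh, Nat.pos_of_ne_zero hs0⟩⟩
    have hq1 : 1 ≤ A.card := Finset.card_pos.2 hAne
    have hqt : A.card ≤ t := by rw [← hcardSh]; exact Finset.card_le_card hASh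
    have hlong_of_mem : ∀ s ∈ A, ∃ l0 ∈ Lg, C l0 < C s := by
      intro s hs
      obtain ⟨hsSh, hrs⟩ := Finset.mem_filter.1 hs
      obtain ⟨l0, hl0⟩ := Finset.card_pos.1 hrs
      obtain ⟨hl0Lg, hl0lt⟩ := Finset.mem_filter.1 hl0
      exact ⟨l0, hl0Lg, hl0lt⟩
    -- packing bound for each late short
    have hCs : ∀ s ∈ A, t*(t*y) + (t*y) * (Lg.filter fun l => C l < C s).card
        + (Sh.filter fun s' => C s' ≤ C s).card ≤ C s := by
      intro s hs
      obtain ⟨l0, hl0Lg, hl0lt⟩ := hlong_of_mem s hs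
      have hCsge : t*t*y + t < C s := by
        have := hLge l0 hl0Lg
        linarith
      set F1 := Sh.filter (fun s' => C s' ≤ C s) with hF1
      set F2 := Lg.filter (fun l => C l < C s) with hF2
      have hF1Sh : F1 ⊆ Sh := Finset.filter_subset _ _
      have hF2Lg : F2 ⊆ Lg := Finset.filter_subset _ _
      have hd1 : Disjoint Nw F1 := by
        rw [Finset.disjoint_left]
        intro x hx hx'
        have h1 := hF1Sh hx'
        simp only [hNw, Finset.mem_Icc] at hx
        simp only [hSh, Finset.mem_Icc] at h1
        omega
      have hd2 : Disjoint (Nw ∪ F1) F2 := by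
        rw [Finset.disjoint_left]
        intro x hx hx'
        have h2 := hF2Lg hx'
        simp only [hLg, Finset.mem_Icc] at h2
        rcases Finset.mem_union.1 hx with hx | hx
        · simp only [hNw, Finset.mem_Icc] at hx; omega
        · have := hF1Sh hx; simp only [hSh, Finset.mem_Icc] at this; omega
      have hsub : Nw ∪ F1 ∪ F2 ⊆ U := by
        intro x hx
        rcases Finset.mem_union.1 hx with hx | hx
        · rcases Finset.mem_union.1 hx with hx | hx
          · exact hNwU hx
          · exact hShU (hF1Sh hx)
        · exact hLgU (hF2Lg hx)
      have hpack := packing_lemma (Nw ∪ F1 ∪ F2) (p3P t y a) σ (hsch.mono hsub) 0 (C s)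
        (by
          intro x hx
          refine ⟨Nat.zero_le _, ?_⟩
          rcases Finset.mem_union.1 hx with hx | hx
          · rcases Finset.mem_union.1 hx with hx | hx
            · have h1 := hNle x hx
              have h2 : σ x + p3P t y a x = C x := (hCdef x).symm
              linarith
            · have h1 := (Finset.mem_filter.1 hx).2
              have h2 : σ x + p3P t y a x = C x := (hCdef x).symm
              linarith
          · have h1 := (Finset.mem_filter.1 hx).2
            have h2 : σ x + p3P t y a x = C x := (hCdef x).symm
            linarith)
      rw [Finset.sum_union hd2, Finset.sum_union hd1, hNmass] at hpack
      have hs1 : ∑ x ∈ F1, p3P t y a x = F1.card := by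
        rw [Finset.sum_congr rfl (fun x hx => hpS x (hF1Sh hx))]
        simp
      have hs2 : ∑ x ∈ F2, p3P t y a x = F2.card * (t*y) := by
        rw [Finset.sum_congr rfl (fun x hx => hpL x (hF2Lg hx))]
        simp [mul_comm]
      rw [hs1, hs2, Nat.sub_zero] at hpack
      calc t*(t*y) + (t*y) * F2.card + F1.card
          = t*(t*y) + F2.card * (t*y) + F1.card := by ring
        _ ≤ C s := by linarith
    -- earlier shorts count
    have hcS : ∀ s ∈ A, (t - A.card) + (A.filter fun s' => C s' ≤ C s).card
        ≤ (Sh.filter fun s' => C s' ≤ C s).card := by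
      intro s hs
      obtain ⟨l0, hl0Lg, hl0lt⟩ := hlong_of_mem s hs
      have hsub : (Sh \ A) ∪ (A.filter fun s' => C s' ≤ C s)
          ⊆ Sh.filter (fun s' => C s' ≤ C s) := by
        intro x hx
        rcases Finset.mem_union.1 hx with hx | hx
        · obtain ⟨hxSh, hxA⟩ := Finset.mem_sdiff.1 hx
          refine Finset.mem_filter.2 ⟨hxSh, ?_⟩
          have hr0 : (Lg.filter fun l => C l < C x).card = 0 := by
            by_contra h
            exact hxA (Finset.mem_filter.2 ⟨hxSh, Nat.pos_of_ne_zero h⟩)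
          have hfe : (Lg.filter fun l => C l < C x) = ∅ := Finset.card_eq_zero.1 hr0
          have hxl0 : C x ≤ C l0 := by
            by_contra hcon2
            push_neg at hcon2
            have hmm : l0 ∈ Lg.filter (fun l => C l < C x) :=
              Finset.mem_filter.2 ⟨hl0Lg, hcon2⟩
            rw [hfe] at hmm
            exact absurd hmm (Finset.notMem_empty _)
          omega
        · obtain ⟨hxA, hxle⟩ := Finset.mem_filter.1 hx
          exact Finset.mem_filter.2 ⟨hASh hxA, hxle⟩
      have hdisj : Disjoint (Sh \ A) (A.filter fun s' => C s' ≤ C s) := by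
        rw [Finset.disjoint_left]; intro x hx hx'
        exact (Finset.mem_sdiff.1 hx).2 (Finset.mem_of_mem_filter _ hx')
      have hcard := Finset.card_le_card hsub
      rw [Finset.card_union_of_disjoint hdisj, Finset.card_sdiff_of_subset hASh, hcardSh] at hcard
      exact hcard
    -- rank sum over A
    have hRankA : 2 * ∑ s ∈ A, (A.filter fun s' => C s' ≤ C s).card = A.card*(A.card+1) :=
      rank_sum A C (fun i hi j hj hij => hdist i (hShU (hASh hi)) j (hShU (hASh hj)) hij)
    -- sum of indices
    have hW : (∑ s ∈ A, s) + (∑ s ∈ A, (t - s)) = A.card*t := by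
      rw [← Finset.sum_add_distrib]
      have hpt : ∀ s ∈ A, s + (t - s) = t := by
        intro s hs
        have := hASh hs
        simp only [hSh, Finset.mem_Icc] at this
        omega
      rw [Finset.sum_congr rfl hpt, Finset.sum_const, smul_eq_mul]
    have hinj : ∀ u ∈ A, ∀ v ∈ A, t - u = t - v → u = v := by
      intro u hu v hv huv
      have h1 := hASh hu; have h2 := hASh hv
      simp only [hSh, Finset.mem_Icc] at h1 h2
      omega
    have hB6 : A.card*(A.card+1) ≤ 2*(∑ s ∈ A, (t-s)) + 2*A.card := by
      have himg : (A.image fun s => t - s).card = A.card :=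
        Finset.card_image_of_injOn hinj
      have hsum_img : ∑ b ∈ A.image (fun s => t - s), b = ∑ s ∈ A, (t - s) :=
        Finset.sum_image hinj
      have hh := sum_distinct_ge (A.image fun s => t - s)
      rw [himg, hsum_img] at hh
      exact hh
    -- disruption lower bound for late shorts
    have hdlS : ∀ s ∈ A, C s ≤ s*(t*y+1) + disr (p3P t y a) (pi3P t y) σ s := by
      intro s hs
      have h1 := hdl s (hShU (hASh hs))
      rw [hπS s (hASh hs)] at h1
      exact h1
    -- summed versions
    have hS1 : ∑ s ∈ A, C s ≤ (∑ s ∈ A, s)*(t*y+1) + ∑ s ∈ A, disr (p3P t y a) (pi3P t y) σ s := by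
      calc ∑ s ∈ A, C s ≤ ∑ s ∈ A, (s*(t*y+1) + disr (p3P t y a) (pi3P t y) σ s) :=
            Finset.sum_le_sum hdlS
        _ = (∑ s ∈ A, s)*(t*y+1) + ∑ s ∈ A, disr (p3P t y a) (pi3P t y) σ s := by
            rw [Finset.sum_add_distrib, Finset.sum_mul]
    have hS2 : A.card*(t*(t*y)) + (t*y)*(∑ s ∈ A, (Lg.filter fun l => C l < C s).card)
        + (∑ s ∈ A, (Sh.filter fun s' => C s' ≤ C s).card) ≤ ∑ s ∈ A, C s := by
      have h1 := Finset.sum_le_sum hCs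
      have h2 : ∑ s ∈ A, (t*(t*y) + (t*y) * (Lg.filter fun l => C l < C s).card
          + (Sh.filter fun s' => C s' ≤ C s).card)
          = A.card*(t*(t*y)) + (t*y)*(∑ s ∈ A, (Lg.filter fun l => C l < C s).card)
            + (∑ s ∈ A, (Sh.filter fun s' => C s' ≤ C s).card) := by
        rw [Finset.sum_add_distrib, Finset.sum_add_distrib, Finset.sum_const,
          smul_eq_mul, ← Finset.mul_sum]
      rw [h2] at h1
      exact h1
    have hS3 : A.card*t + (∑ s ∈ A, (A.filter fun s' => C s' ≤ C s).card)
        ≤ (∑ s ∈ A, (Sh.filter fun s' => C s' ≤ C s).card) + A.card*A.card := by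
      have h1 := Finset.sum_le_sum hcS
      have h2 : ∑ s ∈ A, ((t - A.card) + (A.filter fun s' => C s' ≤ C s).card)
          = A.card*(t-A.card) + ∑ s ∈ A, (A.filter fun s' => C s' ≤ C s).card := by
        rw [Finset.sum_add_distrib, Finset.sum_const, smul_eq_mul]
      rw [h2] at h1
      have h3 : A.card*(t-A.card) + A.card*A.card = A.card*t := by
        rw [← Nat.mul_add]
        congr 1
        omega
      linarith
    have hS4 : ∑ s ∈ A, disr (p3P t y a) (pi3P t y) σ s
        ≤ ∑ s ∈ Sh, disr (p3P t y a) (pi3P t y) σ s :=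
      Finset.sum_le_sum_of_subset hASh
    have hS5 : ∑ s ∈ Sh, (Lg.filter fun l => C l < C s).card
        = ∑ s ∈ A, (Lg.filter fun l => C l < C s).card := by
      rw [← Finset.sum_sdiff hASh]
      have hz : ∑ s ∈ Sh \ A, (Lg.filter fun l => C l < C s).card = 0 := by
        apply Finset.sum_eq_zero
        intro x hx
        obtain ⟨hxSh, hxA⟩ := Finset.mem_sdiff.1 hx
        by_contra h
        exact hxA (Finset.mem_filter.2 ⟨hxSh, Nat.pos_of_ne_zero h⟩)
      rw [hz, zero_add]
    have hS6 : A.card ≤ ∑ s ∈ A, (Lg.filter fun l => C l < C s).card := by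
      calc A.card = ∑ _s ∈ A, 1 := by simp
        _ ≤ ∑ s ∈ A, (Lg.filter fun l => C l < C s).card := by
            apply Finset.sum_le_sum
            intro s hs
            exact (Finset.mem_filter.1 hs).2
    have hPr : 2*(∑ s ∈ A, (Lg.filter fun l => C l < C s).card)
        ≤ (t*y)*(∑ s ∈ A, (Lg.filter fun l => C l < C s).card) :=
      Nat.mul_le_mul_right _ hP2
    have hPq : (t*y)*A.card*1 ≤ (t*y)*A.card*A.card :=
      Nat.mul_le_mul_left _ hq1
    have hB6P : (t*y+1)*(A.card*(A.card+1)) ≤ (t*y+1)*(2*(∑ s ∈ A, (t-s)) + 2*A.card) :=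
      Nat.mul_le_mul_left _ hB6
    have hWP : (t*y+1)*((∑ s ∈ A, s) + (∑ s ∈ A, (t - s))) = (t*y+1)*(A.card*t) := by
      rw [hW]
    linarith [hkey8, hS1, hS2, hS3, hS4, hS5, hS6, hPr, hPq, hB6P, hWP, hRankA]
  -- all shorts exactly on their initial completion times
  have hCshort : ∀ s ∈ Sh, C s = s*(t*y+1) := by
    intro s hs
    have h0 : ∑ s ∈ Sh, (Lg.filter fun l => C l < C s).card = 0 :=
      Finset.sum_eq_zero hrzero
    rw [h0, Nat.le_zero] at hkey8
    have h1 := (Finset.sum_eq_zero_iff.1 hkey8) s hs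
    have h2 := hπS s hs
    simp only [disr] at h1
    rw [hCdef]
    omega

  -- start times of shorts
  have hσshort : ∀ s ∈ Sh, σ s + 1 = s*(t*y+1) := by
    intro s hs
    have h1 := hCshort s hs
    rw [hCdef, hpS s hs] at h1
    omega
  -- each new job sits inside one gap
  have hgap : ∀ n ∈ Nw, (σ n / (t*y+1)) < t ∧ (σ n / (t*y+1))*(t*y+1) ≤ σ n
      ∧ σ n + p3P t y a n ≤ (σ n / (t*y+1))*(t*y+1) + t*y := by
    intro n hn
    have hppos_n := (hpN n hn).2
    have hCn := hNle n hn
    have hCn' : σ n + p3P t y a n = C n := (hCdef n).symm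
    have hBpos : 0 < t*y+1 := by omega
    have hmulTB : t*(t*y+1) = t*t*y + t := by ring
    have hlt : σ n < t*(t*y+1) := by linarith
    have hglt : σ n / (t*y+1) < t := (Nat.div_lt_iff_lt_mul hBpos).2 (by linarith [mul_comm t (t*y+1)])
    have hlow : (σ n / (t*y+1))*(t*y+1) ≤ σ n := Nat.div_mul_le_self _ _
    refine ⟨hglt, hlow, ?_⟩
    by_contra hcon
    push_neg at hcon
    have hdm := Nat.div_add_mod (σ n) (t*y+1)
    have hmlt : σ n % (t*y+1) < t*y+1 := Nat.mod_lt _ hBpos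
    have hcomm : (t*y+1)*(σ n / (t*y+1)) = (σ n / (t*y+1))*(t*y+1) := mul_comm _ _
    set g := σ n / (t*y+1) with hg
    set m := σ n % (t*y+1) with hm
    clear_value g m
    have hkSh : g + 1 ∈ Sh := by simp only [hSh, Finset.mem_Icc]; omega
    have hks : σ (g+1) + 1 = (g+1)*(t*y+1) := hσshort (g+1) hkSh
    have he : (g+1)*(t*y+1) = g*(t*y+1) + (t*y+1) := Nat.succ_mul _ _
    have hne : n ≠ g + 1 := by
      simp only [hNw, Finset.mem_Icc] at hn
      omega
    rcases hsch n (hNwU hn) (g+1) (hShU hkSh) hne with hcase | hcase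
    · linarith
    · rw [hpS (g+1) hkSh] at hcase
      linarith
  -- the partition
  set G : Fin t → Finset ℕ :=
    fun j => (Finset.Icc 1 (3*t)).filter (fun i => σ (2*t+i) / (t*y+1) = (j : ℕ)) with hGdef
  have hmemNw : ∀ i ∈ Finset.Icc 1 (3*t), 2*t + i ∈ Nw := by
    intro i hi
    simp only [Finset.mem_Icc] at hi
    simp only [hNw, Finset.mem_Icc]
    omega
  have hGdisj : ∀ j k : Fin t, j ≠ k → Disjoint (G j) (G k) := by
    intro j k hjk
    rw [Finset.disjoint_left]
    intro x hx hx'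
    have h1 := (Finset.mem_filter.1 hx).2
    have h2 := (Finset.mem_filter.1 hx').2
    exact hjk (Fin.ext (by omega))
  have hGunion : Finset.univ.biUnion G = Finset.Icc 1 (3*t) := by
    ext i
    simp only [hGdef, Finset.mem_biUnion, Finset.mem_univ, true_and, Finset.mem_filter]
    constructor
    · rintro ⟨j, hj, _⟩; exact hj
    · intro hi
      exact ⟨⟨σ (2*t+i) / (t*y+1), (hgap _ (hmemNw i hi)).1⟩, hi, rfl⟩
  refine ⟨G, hGdisj, hGunion, ?_⟩
  -- group sums
  have hle_j : ∀ j : Fin t, ∑ i ∈ G j, t * a i ≤ t*y := by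
    intro j
    set Kj := Nw.filter (fun n => σ n / (t*y+1) = (j:ℕ)) with hKj
    have hKmap : Kj = (G j).map ⟨fun i => 2*t + i, add_right_injective (2*t)⟩ := by
      ext x
      simp only [hKj, hGdef, Finset.mem_map, Function.Embedding.coeFn_mk, Finset.mem_filter]
      constructor
      · intro ⟨hxNw, hxq⟩
        have hx2 : x - 2*t ∈ Finset.Icc 1 (3*t) := by
          simp only [hNw, Finset.mem_Icc] at hxNw
          simp only [Finset.mem_Icc]
          omega
        refine ⟨x - 2*t, ⟨hx2, ?_⟩, ?_⟩
        · have : 2*t + (x - 2*t) = x := by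
            simp only [hNw, Finset.mem_Icc] at hxNw
            omega
          rw [this]; exact hxq
        · simp only [hNw, Finset.mem_Icc] at hxNw
          omega
      · rintro ⟨i, ⟨hi, hq⟩, rfl⟩
        exact ⟨hmemNw i hi, hq⟩
    have hsum_eq : ∑ n ∈ Kj, p3P t y a n = ∑ i ∈ G j, t * a i := by
      rw [hKmap, Finset.sum_map]
      simp only [Function.Embedding.coeFn_mk]
      apply Finset.sum_congr rfl
      intro i hi
      have hiIcc : i ∈ Finset.Icc 1 (3*t) := (Finset.mem_filter.1 hi).1
      have h1 := (hpN (2*t+i) (hmemNw i hiIcc)).1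
      have h2 : 2*t + i - 2*t = i := by omega
      rw [h1, h2]
    have hKjU : Kj ⊆ U := fun x hx => hNwU (Finset.mem_filter.1 hx).1
    have hpack := packing_lemma Kj (p3P t y a) σ (hsch.mono hKjU)
        ((j:ℕ)*(t*y+1)) ((j:ℕ)*(t*y+1) + t*y)
        (by
          intro n hn
          obtain ⟨hnNw, hnq⟩ := Finset.mem_filter.1 hn
          have := hgap n hnNw
          rw [hnq] at this
          exact ⟨this.2.1, this.2.2⟩)
    rw [hsum_eq, Nat.add_sub_cancel_left] at hpack
    exact hpack
  have htotal : ∑ j : Fin t, ∑ i ∈ G j, t * a i = t*(t*y) := by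
    rw [← Finset.sum_biUnion (fun j _ k _ hjk => hGdisj j k hjk), hGunion,
      ← Finset.mul_sum, hsum]
  have heach : ∀ j : Fin t, ∑ i ∈ G j, t * a i = t*y := by
    by_contra hcon
    push_neg at hcon
    obtain ⟨j0, hj0⟩ := hcon
    have hlt : ∑ i ∈ G j0, t * a i < t*y := lt_of_le_of_ne (hle_j j0) hj0
    have := Finset.sum_lt_sum (fun j _ => hle_j j) ⟨j0, Finset.mem_univ _, hlt⟩
    rw [htotal, Finset.sum_const, Finset.card_univ, Fintype.card_fin, smul_eq_mul] at this
    omega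
  intro j
  have h1 := heach j
  rw [← Finset.mul_sum] at h1
  exact Nat.eq_of_mul_eq_mul_left (by omega) h1

/-- Theorem 2, part 2: 3-PARTITION reduces to `1|Δ̄ ≤ ε, ΣT ≤ 0|−`. Old jobs are
`{1, …, 2t}`, new jobs are `{2t+1, …, 5t}`, and ε = t³y + t(t+1)/2. -/
theorem three_partition_reduction_Ttot
    (t y : ℕ) (a : ℕ → ℕ)
    (ht : 1 ≤ t) (hy : 1 ≤ y)
    (ha : ∀ i ∈ Finset.Icc 1 (3 * t), 0 < a i)
    (hsum : ∑ i ∈ Finset.Icc 1 (3 * t), a i = t * y) :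
    (∃ S : Fin t → Finset ℕ,
        (∀ j k, j ≠ k → Disjoint (S j) (S k)) ∧
        Finset.univ.biUnion S = Finset.Icc 1 (3 * t) ∧
        ∀ j, ∑ i ∈ S j, a i = y) ↔
      (∃ σ, IsSchedule (Finset.Icc 1 (2 * t) ∪ Finset.Icc (2 * t + 1) (5 * t)) (p3P t y a) σ ∧
        Dsum (Finset.Icc 1 (2 * t)) (p3P t y a) (pi3P t y) σ ≤ t ^ 3 * y + t * (t + 1) / 2 ∧
        Ttot (Finset.Icc 1 (2 * t) ∪ Finset.Icc (2 * t + 1) (5 * t)) (p3P t y a) (d3P t y) σ = 0) := by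
  constructor
  · rintro ⟨S, h1, h2, h3⟩
    exact forward_dir t y a ht hy hsum S h1 h2 h3
  · rintro ⟨σ, h1, h2, h3⟩
    exact backward_dir t y a ht hy ha hsum σ h1 h2 h3
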